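/- For every instance with two budget-additive buyers, there exists a stable outcome whose social welfare is at least OPT/4, where OPT is the maximum welfare over all integral allocations. -/

import Mathlib

/-!
Order the buyers so that `v₁(M) ≥ v₂(M)`; then `OPT ≤ v₁(M) + v₂(M) ≤ 2 v₁(M)`. Price every item
at buyer 1's value for it. Buyer 2 takes any demanded bundle `X₂`, and paying `w₁(X₂)` for it is
worth it to him, so `v₂(X₂) ≥ w₁(X₂)`. At these prices buyer 1 is indifferent between all bundles
that fit in his budget, so he may take a within-budget `X₁ ⊆ M \ X₂` that recovers half of
`min(w₁(M \ X₂), B₁)` (a knapsack half-approximation). Together the two bundles are worth at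
least `v₁(M)/2 ≥ OPT/4`.
-/

open Finset

section

variable {α : Type*}

def budgetValue (w : α → ℝ) (B : ℝ) (S : Finset α) : ℝ :=
  min (∑ j ∈ S, w j) B

def IsDemanded (v : Finset α → ℝ) (p : α → ℝ) (X : Finset α) : Prop :=
  ∀ S, v S - ∑ j ∈ S, p j ≤ v X - ∑ j ∈ X, p j

theorem exists_isDemanded [Fintype α] (v : Finset α → ℝ) (p : α → ℝ) :
    ∃ X, IsDemanded v p X := by
  obtain ⟨X, -, hX⟩ := exists_max_image univ (fun S => v S - ∑ j ∈ S, p j) univ_nonempty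
  exact ⟨X, fun S => hX S (mem_univ S)⟩

theorem budgetValue_mono {w : α → ℝ} {B : ℝ} (hw : ∀ j, 0 ≤ w j) :
    Monotone (budgetValue w B) := fun _ _ hST =>
  min_le_min_right B (sum_le_sum_of_subset_of_nonneg hST fun j _ _ => hw j)

theorem budgetValue_univ_le_compl_add_sum [Fintype α] [DecidableEq α] {w : α → ℝ} (B : ℝ)
    (hw : ∀ j, 0 ≤ w j) (Y : Finset α) :
    budgetValue w B univ ≤ budgetValue w B Yᶜ + ∑ j ∈ Y, w j := by
  rw [budgetValue, budgetValue, ← sum_compl_add_sum Y, ← min_add_add_right]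
  exact min_le_min_left _ (le_add_of_nonneg_right (sum_nonneg fun j _ => hw j))

theorem isDemanded_budgetValue_self {w : α → ℝ} {B : ℝ} {X : Finset α}
    (hX : ∑ j ∈ X, w j ≤ B) : IsDemanded (budgetValue w B) w X := by
  intro S
  rw [budgetValue, budgetValue, min_eq_left hX, sub_self, sub_nonpos]
  exact min_le_left _ _

/-- Half-approximation for knapsack when every item fits on its own. -/
theorem exists_subset_sum_le_and_min_le_two_mul [DecidableEq α] {w : α → ℝ} {B : ℝ}
    (hB : 0 ≤ B) (hw0 : ∀ j, 0 ≤ w j) (hwB : ∀ j, w j ≤ B) (C : Finset α) :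
    ∃ X ⊆ C, ∑ j ∈ X, w j ≤ B ∧ min (∑ j ∈ C, w j) B ≤ 2 * ∑ j ∈ X, w j := by
  induction C using Finset.induction_on with
  | empty => exact ⟨∅, subset_rfl, by simpa using hB, by simp [hB]⟩
  | insert a C ha ih =>
    obtain ⟨X, hXC, hXB, hXhalf⟩ := ih
    rw [sum_insert ha]
    have haX : a ∉ X := fun h => ha (hXC h)
    by_cases hfit : w a + ∑ j ∈ X, w j ≤ B
    · refine ⟨insert a X, insert_subset_insert a hXC, by rwa [sum_insert haX], ?_⟩
      rw [sum_insert haX]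
      have hmin : min (w a + ∑ j ∈ C, w j) B ≤ w a + min (∑ j ∈ C, w j) B := by
        rw [← min_add_add_left]
        exact min_le_min_left _ (le_add_of_nonneg_left (hw0 a))
      linarith [hw0 a]
    -- Otherwise `X` or `{a}` carries half of `w a + w(X) > B`.
    · have hlt : min (w a + ∑ j ∈ C, w j) B < w a + ∑ j ∈ X, w j :=
        (min_le_right _ _).trans_lt (not_le.mp hfit)
      rcases le_total (w a) (∑ j ∈ X, w j) with h | h
      · exact ⟨X, hXC.trans (subset_insert a C), hXB, by linarith⟩
      · exact ⟨{a}, singleton_subset_iff.mpr (mem_insert_self a C), by simpa using hwB a,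
          by rw [sum_singleton]; linarith⟩

theorem exists_isDemanded_pair_of_prices_eq_values [Fintype α] [DecidableEq α] {w : α → ℝ}
    {B : ℝ} (hB : 0 ≤ B) (hw0 : ∀ j, 0 ≤ w j) (hwB : ∀ j, w j ≤ B)
    {v : Finset α → ℝ} (hv : 0 ≤ v ∅) :
    ∃ X Y, Disjoint X Y ∧ IsDemanded (budgetValue w B) w X ∧ IsDemanded v w Y ∧
      budgetValue w B univ ≤ 2 * (budgetValue w B X + v Y) := by
  obtain ⟨Y, hY⟩ := exists_isDemanded v w
  obtain ⟨X, hXY, hXB, hXhalf⟩ := exists_subset_sum_le_and_min_le_two_mul hB hw0 hwB Yᶜ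
  have hwY : ∑ j ∈ Y, w j ≤ v Y := by
    have := hY ∅
    rw [sum_empty, sub_zero] at this
    linarith
  refine ⟨X, Y, disjoint_compl_left.mono_left hXY, isDemanded_budgetValue_self hXB, hY, ?_⟩
  have hsplit := budgetValue_univ_le_compl_add_sum B hw0 Y
  unfold budgetValue at hsplit ⊢
  rw [min_eq_left hXB]
  linarith [sum_nonneg fun j (_ : j ∈ Y) => hw0 j]

end

/-- for every instance with two budget-additive buyers there
exists a stable outcome whose welfare is at least `OPT/4`. -/
theorem stmt17 {α : Type*} [Fintype α] [DecidableEq α]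
    (B₁ B₂ : ℝ) (hB₁ : 0 ≤ B₁) (hB₂ : 0 ≤ B₂)
    (w₁ w₂ : α → ℝ) (hw₁0 : ∀ j, 0 ≤ w₁ j) (hw₂0 : ∀ j, 0 ≤ w₂ j)
    (hw₁B : ∀ j, w₁ j ≤ B₁) (hw₂B : ∀ j, w₂ j ≤ B₂)
    (v₁ v₂ : Finset α → ℝ)
    (hv₁ : ∀ S, v₁ S = min (∑ j ∈ S, w₁ j) B₁)
    (hv₂ : ∀ S, v₂ S = min (∑ j ∈ S, w₂ j) B₂) :
    ∃ (p : α → ℝ) (X₁ X₂ : Finset α),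
      (∀ j, 0 ≤ p j) ∧
      Disjoint X₁ X₂ ∧
      (∀ S : Finset α, v₁ S - ∑ j ∈ S, p j ≤ v₁ X₁ - ∑ j ∈ X₁, p j) ∧
      (∀ S : Finset α, v₂ S - ∑ j ∈ S, p j ≤ v₂ X₂ - ∑ j ∈ X₂, p j) ∧
      (∀ Y₁ Y₂ : Finset α, Disjoint Y₁ Y₂ → Y₁ ∪ Y₂ = Finset.univ →
        (v₁ Y₁ + v₂ Y₂) / 4 ≤ v₁ X₁ + v₂ X₂) := by
  obtain rfl : v₁ = budgetValue w₁ B₁ := funext hv₁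
  obtain rfl : v₂ = budgetValue w₂ B₂ := funext hv₂
  have hOPT (Y₁ Y₂ : Finset α) : budgetValue w₁ B₁ Y₁ + budgetValue w₂ B₂ Y₂ ≤
      budgetValue w₁ B₁ univ + budgetValue w₂ B₂ univ :=
    add_le_add (budgetValue_mono hw₁0 (subset_univ Y₁)) (budgetValue_mono hw₂0 (subset_univ Y₂))
  have hv₁0 : 0 ≤ budgetValue w₁ B₁ ∅ := by simp [budgetValue, hB₁]
  have hv₂0 : 0 ≤ budgetValue w₂ B₂ ∅ := by simp [budgetValue, hB₂]
  rcases le_total (budgetValue w₂ B₂ univ) (budgetValue w₁ B₁ univ) with h | h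
  · obtain ⟨X₁, X₂, hdisj, hX₁, hX₂, hwel⟩ :=
      exists_isDemanded_pair_of_prices_eq_values hB₁ hw₁0 hw₁B hv₂0
    exact ⟨w₁, X₁, X₂, hw₁0, hdisj, hX₁, hX₂, fun Y₁ Y₂ _ _ => by linarith [hOPT Y₁ Y₂]⟩
  · obtain ⟨X₂, X₁, hdisj, hX₂, hX₁, hwel⟩ :=
      exists_isDemanded_pair_of_prices_eq_values hB₂ hw₂0 hw₂B hv₁0
    exact ⟨w₂, X₁, X₂, hw₂0, hdisj.symm, hX₁, hX₂, fun Y₁ Y₂ _ _ => by linarith [hOPT Y₁ Y₂]⟩
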